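/- Let κ > 0 and on {(x,y) ∈ ℝ² : x > y} define Λ(x,y) = ((κ−4)(κ−2)(κ+4)/(2κ²))·[ (x−y)^{(3κ−4)/(2κ)} log(x−y) + (x−y)^{−(κ+4)/(2κ)}·(4κ x² − (4κ+κ²) y²)/16 ]. Then (∂/∂x + ∂/∂y)² Λ = −((κ−4)(κ−2)(κ+4)/16)·(x−y)^{−1/2−2/κ}. That is, with Z(x,y) = (x−y)^{−1/2−2/κ}, one has (L₁² − (κ/4)L₂)Λ = βZ with logarithmic coupling β = −(1/16)(κ−4)(κ−2)(κ+4). -/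

import Mathlib

/-- Logarithmic partner of the grade-two singular vector over the SLE_κ(ρ=-(κ+4)/2)
partition function. -/
noncomputable def Λ11 (κ x y : ℝ) : ℝ :=
  (κ - 4) * (κ - 2) * (κ + 4) / (2 * κ ^ 2) *
    ((x - y) ^ ((3 * κ - 4) / (2 * κ)) * Real.log (x - y)
      + (x - y) ^ (-(κ + 4) / (2 * κ))
          * (4 * κ * x ^ 2 - (4 * κ + κ ^ 2) * y ^ 2) / 16)

/-- `(∂/∂x + ∂/∂y) Λ`. -/
noncomputable def DΛ11 (κ x y : ℝ) : ℝ :=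
  deriv (fun x' => Λ11 κ x' y) x + deriv (fun y' => Λ11 κ x y') y

/-!
The operator `L₁ = ∂/∂x + ∂/∂y` annihilates every function of `x - y`, so such a factor passes
through it. Up to the constant `C = (κ-4)(κ-2)(κ+4)/(2κ²)`, `Λ` is a function of `x - y` plus
`(x - y)^q · P(x, y) / 16` with `q = -(κ+4)/(2κ) = -1/2 - 2/κ` and
`P = 4κx² - (4κ+κ²)y²`. Hence `L₁² Λ = C (x - y)^q L₁² P / 16`, and
`L₁² P = 8κ - 2(4κ+κ²) = -2κ²` is a constant.
-/

noncomputable def L₁ (F : ℝ → ℝ → ℝ) (x y : ℝ) : ℝ :=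
  deriv (fun x' => F x' y) x + deriv (fun y' => F x y') y

lemma L₁_eq_of_hasDerivAt {F : ℝ → ℝ → ℝ} {x y Fx Fy : ℝ}
    (hx : HasDerivAt (fun x' => F x' y) Fx x) (hy : HasDerivAt (fun y' => F x y') Fy y) :
    L₁ F x y = Fx + Fy := by
  rw [L₁, hx.deriv, hy.deriv]

lemma L₁_congr_of_lt {F G : ℝ → ℝ → ℝ} (h : ∀ x y, y < x → F x y = G x y) {x y : ℝ}
    (hxy : y < x) : L₁ F x y = L₁ G x y := by
  have hx : (fun x' => F x' y) =ᶠ[nhds x] fun x' => G x' y := by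
    filter_upwards [Ioi_mem_nhds hxy] with x' hx' using h x' y hx'
  have hy : (fun y' => F x y') =ᶠ[nhds y] fun y' => G x y' := by
    filter_upwards [Iio_mem_nhds hxy] with y' hy' using h x y' hy'
  rw [L₁, L₁, hx.deriv_eq, hy.deriv_eq]

lemma L₁_comp_sub_add_comp_sub_mul {φ ψ : ℝ → ℝ} {G : ℝ → ℝ → ℝ} {x y Gx Gy : ℝ}
    (hφ : DifferentiableAt ℝ φ (x - y)) (hψ : DifferentiableAt ℝ ψ (x - y))
    (hGx : HasDerivAt (fun x' => G x' y) Gx x) (hGy : HasDerivAt (fun y' => G x y') Gy y) :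
    L₁ (fun x y => φ (x - y) + ψ (x - y) * G x y) x y = ψ (x - y) * (Gx + Gy) := by
  have hx : HasDerivAt (fun x' => φ (x' - y) + ψ (x' - y) * G x' y)
      (deriv φ (x - y) + (deriv ψ (x - y) * G x y + ψ (x - y) * Gx)) x :=
    (hφ.hasDerivAt.comp_sub_const x y).add ((hψ.hasDerivAt.comp_sub_const x y).mul hGx)
  have hy : HasDerivAt (fun y' => φ (x - y') + ψ (x - y') * G x y')
      (-deriv φ (x - y) + (-deriv ψ (x - y) * G x y + ψ (x - y) * Gy)) y :=
    (hφ.hasDerivAt.comp_const_sub x y).add ((hψ.hasDerivAt.comp_const_sub x y).mul hGy)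
  rw [L₁_eq_of_hasDerivAt hx hy]
  ring

lemma L₁_comp_sub_add_comp_sub_mul_quadratic {φ ψ : ℝ → ℝ} {x y : ℝ}
    (hφ : DifferentiableAt ℝ φ (x - y)) (hψ : DifferentiableAt ℝ ψ (x - y)) (a b c d : ℝ) :
    L₁ (fun x y => φ (x - y) + ψ (x - y) * (a * x ^ 2 + b * y ^ 2 + c * x + d * y)) x y
      = ψ (x - y) * (2 * a * x + 2 * b * y + c + d) := by
  have hGx : HasDerivAt (fun x' => a * x' ^ 2 + b * y ^ 2 + c * x' + d * y) (2 * a * x + c) x := by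
    refine ((((hasDerivAt_pow 2 x).const_mul a).add_const (b * y ^ 2)).add
      ((hasDerivAt_id x).const_mul c)).add_const (d * y) |>.congr_deriv ?_
    simp only [Nat.cast_ofNat, Nat.add_one_sub_one, pow_one, mul_one]
    ring
  have hGy : HasDerivAt (fun y' => a * x ^ 2 + b * y' ^ 2 + c * x + d * y') (2 * b * y + d) y := by
    refine ((((hasDerivAt_pow 2 y).const_mul b).const_add (a * x ^ 2)).add_const (c * x)).add
      ((hasDerivAt_id y).const_mul d) |>.congr_deriv ?_
    simp only [Nat.cast_ofNat, Nat.add_one_sub_one, pow_one, mul_one]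
    ring
  rw [L₁_comp_sub_add_comp_sub_mul hφ hψ hGx hGy]
  ring

lemma DΛ11_eq {κ x y : ℝ} (hxy : y < x) : DΛ11 κ x y = (x - y) ^ (-(κ + 4) / (2 * κ)) *
    ((κ - 4) * (κ - 2) * (κ + 4) / (2 * κ ^ 2) / 16 * (8 * κ * x - 2 * (4 * κ + κ ^ 2) * y)) := by
  have hxy' : x - y ≠ 0 := sub_ne_zero.mpr hxy.ne'
  set C := (κ - 4) * (κ - 2) * (κ + 4) / (2 * κ ^ 2)
  change L₁ (Λ11 κ) x y = _
  convert L₁_comp_sub_add_comp_sub_mul_quadratic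
    (φ := fun u => C * u ^ ((3 * κ - 4) / (2 * κ)) * Real.log u)
    (ψ := fun u => u ^ (-(κ + 4) / (2 * κ)))
    (by fun_prop (disch := exact hxy')) (by fun_prop (disch := exact hxy'))
    (C / 16 * (4 * κ)) (C / 16 * -(4 * κ + κ ^ 2)) 0 0 using 2
  · funext x y
    rw [Λ11]
    ring
  · ring

/-- `(∂/∂x + ∂/∂y)² Λ = -((κ-4)(κ-2)(κ+4)/16) (x-y)^{-1/2-2/κ}`,
i.e. `(L₁² - (κ/4)L₂) Λ = β Z` with logarithmic coupling
`β = -(1/16)(κ-4)(κ-2)(κ+4)`. -/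
theorem stmt_11 (κ : ℝ) (hκ : 0 < κ) :
    ∀ x y : ℝ, y < x →
      deriv (fun x' => DΛ11 κ x' y) x + deriv (fun y' => DΛ11 κ x y') y
        = -((κ - 4) * (κ - 2) * (κ + 4) / 16) * (x - y) ^ (-1 / 2 - 2 / κ) := by
  intro x y hxy
  change L₁ (DΛ11 κ) x y = _
  rw [L₁_congr_of_lt (fun x y h => DΛ11_eq h) hxy]
  have hxy' : x - y ≠ 0 := sub_ne_zero.mpr hxy.ne'
  have hq : -(κ + 4) / (2 * κ) = -1 / 2 - 2 / κ := by field_simp; ring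
  set C := (κ - 4) * (κ - 2) * (κ + 4) / (2 * κ ^ 2) with hC
  convert L₁_comp_sub_add_comp_sub_mul_quadratic
    (φ := fun _ => 0) (ψ := fun u => u ^ (-(κ + 4) / (2 * κ)))
    (differentiableAt_const 0) (by fun_prop (disch := exact hxy'))
    0 0 (C / 16 * (8 * κ)) (C / 16 * -(2 * (4 * κ + κ ^ 2))) using 1
  · congr 1
    funext x y
    ring
  · rw [hq, hC]
    field_simp
    ring
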